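/- For integers $k \ge 0$ and $M \ge 3$, $\sum_{m=M+1}^{\infty}\frac{k+2}{\sqrt{(m-2)(k+m)}\,(k+2m-2)^2} \le \int_{M}^{\infty}\frac{(k+2)\,dm}{\sqrt{(m-2)(k+m)}\,(k+2m-2)^2} = \frac{k+2}{(k+2M-2)\left(2\left(\sqrt{(M-2)(k+M)}+M-1\right)+k\right)}$. -/

import Mathlib

open MeasureTheory Filter Set Topology

/-! The integrand is positive and decreasing on `(2, ∞)`, so the integral test bounds the tail sum
by the integral. A primitive is `2 √((m - 2)(k + m)) / ((k + 2)(k + 2m - 2)) - 1 / (k + 2)`;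
rationalising it gives `-tailIntegral k m`, which visibly tends to `0` at infinity. -/

noncomputable def tailIntegrand (k m : ℝ) : ℝ :=
  (k + 2) / (√((m - 2) * (k + m)) * (k + 2 * m - 2) ^ 2)

noncomputable def tailIntegral (k m : ℝ) : ℝ :=
  (k + 2) / ((k + 2 * m - 2) * (2 * (√((m - 2) * (k + m)) + m - 1) + k))

variable {k m : ℝ}

lemma tailIntegrand_nonneg (hk : -2 < k) (m : ℝ) : 0 ≤ tailIntegrand k m :=
  div_nonneg (by linarith) (by positivity)

lemma tailIntegrand_antitoneOn (hk : -2 < k) : AntitoneOn (tailIntegrand k) (Ioi 2) := by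
  intro a ha b hb hab
  simp only [mem_Ioi] at ha hb
  have : 0 < √((a - 2) * (k + a)) := Real.sqrt_pos.2 (by nlinarith)
  have : 0 < k + 2 * a - 2 := by linarith
  unfold tailIntegrand
  gcongr <;> linarith

/-- Rationalising the denominator, using `(k + 2m - 2)² - 4 (m - 2)(k + m) = (k + 2)²`. -/
lemma tailIntegral_eq (hk : -2 < k) (hm : 2 ≤ m) :
    tailIntegral k m = 1 / (k + 2) - 2 * √((m - 2) * (k + m)) / ((k + 2) * (k + 2 * m - 2)) := by
  have hs := Real.sq_sqrt (show 0 ≤ (m - 2) * (k + m) by nlinarith)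
  have := Real.sqrt_nonneg ((m - 2) * (k + m))
  unfold tailIntegral
  generalize √((m - 2) * (k + m)) = s at *
  have : 0 < k + 2 := by linarith
  have : 0 < k + 2 * m - 2 := by linarith
  have : 0 < 2 * (s + m - 1) + k := by linarith
  field_simp
  linear_combination (4 : ℝ) * hs

lemma continuousAt_tailIntegral (hk : -2 < k) (hm : 2 ≤ m) : ContinuousAt (tailIntegral k) m := by
  have := Real.sqrt_nonneg ((m - 2) * (k + m))
  refine continuousAt_const.div (by fun_prop) ?_
  apply mul_ne_zero <;> linarith

lemma hasDerivAt_tailIntegral (hk : -2 < k) (hm : 2 < m) :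
    HasDerivAt (tailIntegral k) (-tailIntegrand k m) m := by
  have hg : 0 < (m - 2) * (k + m) := by nlinarith
  have hsqrt : HasDerivAt (fun x ↦ √((x - 2) * (k + x)))
      ((1 * (k + m) + (m - 2) * 1) / (2 * √((m - 2) * (k + m)))) m :=
    (((hasDerivAt_id m).sub_const 2).mul ((hasDerivAt_id m).const_add k)).sqrt hg.ne'
  have hden : HasDerivAt (fun x ↦ (k + 2) * (k + 2 * x - 2)) ((k + 2) * (2 * 1)) m :=
    ((((hasDerivAt_id m).const_mul 2).const_add k).sub_const 2).const_mul (k + 2)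
  have hden0 : (k + 2) * (k + 2 * m - 2) ≠ 0 := mul_ne_zero (by linarith) (by linarith)
  have hF := ((hsqrt.const_mul 2).div hden hden0).const_sub (1 / (k + 2))
  have heq : tailIntegral k =ᶠ[𝓝 m]
      fun x ↦ 1 / (k + 2) - 2 * √((x - 2) * (k + x)) / ((k + 2) * (k + 2 * x - 2)) := by
    filter_upwards [Ioi_mem_nhds hm] with x hx using tailIntegral_eq hk (le_of_lt hx)
  refine (hF.congr_of_eventuallyEq heq).congr_deriv ?_
  have hs := Real.sq_sqrt hg.le
  have hs0 := Real.sqrt_pos.2 hg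
  unfold tailIntegrand
  generalize √((m - 2) * (k + m)) = s at *
  have : k + 2 ≠ 0 := by linarith
  have : k + 2 * m - 2 ≠ 0 := by linarith
  field_simp
  linear_combination (4 : ℝ) * hs

lemma tendsto_tailIntegral_atTop (k : ℝ) : Tendsto (tailIntegral k) atTop (𝓝 0) := by
  have hA : Tendsto (fun m : ℝ ↦ k + 2 * m - 2) atTop atTop :=
    tendsto_atTop_add_const_right _ _ (tendsto_atTop_add_const_left _ _
      (tendsto_id.const_mul_atTop two_pos))
  have hB : Tendsto (fun m : ℝ ↦ 2 * (√((m - 2) * (k + m)) + m - 1) + k) atTop atTop :=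
    tendsto_atTop_mono (fun m ↦ by linarith [Real.sqrt_nonneg ((m - 2) * (k + m))]) hA
  exact tendsto_const_nhds.div_atTop (hA.atTop_mul_atTop₀ hB)

variable {a : ℝ}

lemma hasDerivAt_neg_tailIntegral (hk : -2 < k) (hm : 2 < m) :
    HasDerivAt (-tailIntegral k) (tailIntegrand k m) m :=
  neg_neg (tailIntegrand k m) ▸ (hasDerivAt_tailIntegral hk hm).neg

lemma integrableOn_Ioi_tailIntegrand (hk : -2 < k) (ha : 2 ≤ a) :
    IntegrableOn (tailIntegrand k) (Ioi a) :=
  integrableOn_Ioi_deriv_of_nonneg (continuousAt_tailIntegral hk ha).neg.continuousWithinAt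
    (fun _ hx ↦ hasDerivAt_neg_tailIntegral hk (ha.trans_lt hx))
    (fun x _ ↦ tailIntegrand_nonneg hk x) (tendsto_tailIntegral_atTop k).neg

lemma integral_Ioi_tailIntegrand (hk : -2 < k) (ha : 2 ≤ a) :
    ∫ x in Ioi a, tailIntegrand k x = tailIntegral k a := by
  rw [integral_Ioi_of_hasDerivAt_of_nonneg (continuousAt_tailIntegral hk ha).neg.continuousWithinAt
    (fun _ hx ↦ hasDerivAt_neg_tailIntegral hk (ha.trans_lt hx))
    (fun x _ ↦ tailIntegrand_nonneg hk x) (tendsto_tailIntegral_atTop k).neg, neg_zero, zero_sub,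
    Pi.neg_apply, neg_neg]

/-- tail sum bounded by an integral with closed form. -/
theorem tail_sum_le_integral (k M : ℕ) (hM : 3 ≤ M) :
    (∑' i : ℕ, ((k : ℝ) + 2) /
        (Real.sqrt ((((M : ℝ) + 1 + (i : ℝ)) - 2) * ((k : ℝ) + ((M : ℝ) + 1 + (i : ℝ)))) *
          ((k : ℝ) + 2 * ((M : ℝ) + 1 + (i : ℝ)) - 2) ^ 2)
      ≤ ∫ m in Set.Ioi (M : ℝ),
          ((k : ℝ) + 2) / (Real.sqrt ((m - 2) * ((k : ℝ) + m)) * ((k : ℝ) + 2 * m - 2) ^ 2)) ∧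
    (∫ m in Set.Ioi (M : ℝ),
        ((k : ℝ) + 2) / (Real.sqrt ((m - 2) * ((k : ℝ) + m)) * ((k : ℝ) + 2 * m - 2) ^ 2)
      = ((k : ℝ) + 2) / (((k : ℝ) + 2 * (M : ℝ) - 2) *
          (2 * (Real.sqrt (((M : ℝ) - 2) * ((k : ℝ) + (M : ℝ))) + (M : ℝ) - 1) + (k : ℝ)))) := by
  have hk : -2 < (k : ℝ) := by linarith [k.cast_nonneg (α := ℝ)]
  have hM2 : (2 : ℝ) < M := by exact_mod_cast hM
  change ∑' i : ℕ, tailIntegrand k (M + 1 + i) ≤ ∫ m in Ioi (M : ℝ), tailIntegrand k m ∧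
    ∫ m in Ioi (M : ℝ), tailIntegrand k m = tailIntegral k M
  refine ⟨?_, integral_Ioi_tailIntegrand hk hM2.le⟩
  have hanti := (tailIntegrand_antitoneOn hk).mono (Ici_subset_Ioi.2 hM2)
  convert hanti.tsum_comp_add_le_integral M (integrableOn_Ioi_tailIntegrand hk hM2.le)
    (fun t _ ↦ tailIntegrand_nonneg hk t) using 4
  push_cast
  ring
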